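/- Let (L,E,R,∂₂,∂₁,{,}) be a 2-crossed module of commutative algebras. Then the map e▶'l := {e⊗∂₂(l)} defines an action of E on L, and with this action (L,E,∂₂) is a crossed module: ∂₂(e▶'l) = e·∂₂(l) and ∂₂(l)▶'l' = ll' for all e ∈ E and l,l' ∈ L. -/

import Mathlib

/-- An action of a commutative `k`-algebra `R` on a commutative `k`-algebra `M`:
a `k`-bilinear map satisfying `r▶(mm') = (r▶m)m' = m(r▶m')` and `(rr')▶m = r▶(r'▶m)`. -/
structure AlgAction (k R M : Type*) [CommRing k] [CommRing R] [CommRing M]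
    [Algebra k R] [Algebra k M] where
  act : R →ₗ[k] M →ₗ[k] M
  a1 : ∀ (r : R) (m m' : M), act r (m * m') = act r m * m'
  a1' : ∀ (r : R) (m m' : M), act r (m * m') = m * act r m'
  a2 : ∀ (r r' : R) (m : M), act (r * r') m = act r (act r' m)

/-- A 2-crossed module of commutative `k`-algebras, with Peiffer lifting `lift e e' = {e ⊗ e'}`.
The action `e ▶' l` of `E` on `L` is `lift e (d2 l)` (axiom 2XM5 is definitional). -/
structure TwoCrossedModule (k L E R : Type*) [CommRing k] [CommRing L] [CommRing E] [CommRing R]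
    [Algebra k L] [Algebra k E] [Algebra k R] where
  actE : AlgAction k R E
  actL : AlgAction k R L
  d2 : L →ₗ[k] E
  d1 : E →ₗ[k] R
  d2_mul : ∀ l l' : L, d2 (l * l') = d2 l * d2 l'
  d1_mul : ∀ e e' : E, d1 (e * e') = d1 e * d1 e'
  comp : ∀ l : L, d1 (d2 l) = 0
  d1_act : ∀ (r : R) (e : E), d1 (actE.act r e) = r * d1 e
  d2_act : ∀ (r : R) (l : L), d2 (actL.act r l) = actE.act r (d2 l)
  lift : E →ₗ[k] E →ₗ[k] L
  axm1 : ∀ e e' : E, d2 (lift e e') = e * e' - actE.act (d1 e') e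
  axm2 : ∀ l l' : L, lift (d2 l) (d2 l') = l * l'
  axm3 : ∀ e e' e'' : E, lift e (e' * e'') = lift (e * e') e'' + actL.act (d1 e'') (lift e e')
  axm4 : ∀ (l : L) (e : E), lift (d2 l) e = lift e (d2 l) - actL.act (d1 e) l
  axm6a : ∀ (r : R) (e e' : E), actL.act r (lift e e') = lift (actE.act r e) e'
  axm6b : ∀ (r : R) (e e' : E), actL.act r (lift e e') = lift e (actE.act r e')

namespace TwoCrossedModule

variable {k L E R : Type*} [CommRing k] [CommRing L] [CommRing E] [CommRing R]
  [Algebra k L] [Algebra k E] [Algebra k R] (T : TwoCrossedModule k L E R)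

/-- XM1 for `(L, E, ∂₂)`: 2XM1 with `∂₁ ∂₂ = 0`. -/
theorem d2_lift_d2 (e : E) (l : L) : T.d2 (T.lift e (T.d2 l)) = e * T.d2 l := by
  rw [T.axm1, T.comp, map_zero, LinearMap.zero_apply, sub_zero]

theorem lift_mul_d2 (e e' : E) (l : L) :
    T.lift e (e' * T.d2 l) = T.lift (e * e') (T.d2 l) := by
  rw [T.axm3, T.comp, map_zero, LinearMap.zero_apply, add_zero]

/-- 2XM2 applied to `lift e (∂₂ l)`, rewritten through XM1. -/
theorem lift_mul_d2_d2 (e : E) (l l' : L) :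
    T.lift (e * T.d2 l) (T.d2 l') = T.lift e (T.d2 l) * l' := by
  rw [← T.axm2 (T.lift e (T.d2 l)) l', d2_lift_d2]

theorem lift_d2_mul_right (e : E) (l l' : L) :
    T.lift e (T.d2 (l * l')) = T.lift e (T.d2 l) * l' := by
  rw [T.d2_mul, lift_mul_d2, lift_mul_d2_d2]

theorem lift_d2_mul_left (e : E) (l l' : L) :
    T.lift e (T.d2 (l * l')) = l * T.lift e (T.d2 l') := by
  rw [mul_comm l, mul_comm l, lift_d2_mul_right]

theorem lift_mul_d2_eq_lift_lift (e e' : E) (l : L) :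
    T.lift (e * e') (T.d2 l) = T.lift e (T.d2 (T.lift e' (T.d2 l))) := by
  rw [d2_lift_d2, lift_mul_d2]

end TwoCrossedModule

theorem stmt3 (k L E R : Type*) [CommRing k] [CommRing L] [CommRing E] [CommRing R]
    [Algebra k L] [Algebra k E] [Algebra k R] (T : TwoCrossedModule k L E R) :
    ∀ act' : E → L → L,
      (act' = fun e l => T.lift e (T.d2 l)) →
      (∀ (e e' : E) (l : L), act' (e + e') l = act' e l + act' e' l) ∧
      (∀ (e : E) (l l' : L), act' e (l + l') = act' e l + act' e l') ∧
      (∀ (c : k) (e : E) (l : L), act' (c • e) l = c • act' e l) ∧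
      (∀ (c : k) (e : E) (l : L), act' e (c • l) = c • act' e l) ∧
      (∀ (e : E) (l l' : L), act' e (l * l') = act' e l * l') ∧
      (∀ (e : E) (l l' : L), act' e (l * l') = l * act' e l') ∧
      (∀ (e e' : E) (l : L), act' (e * e') l = act' e (act' e' l)) ∧
      -- XM1
      (∀ (e : E) (l : L), T.d2 (act' e l) = e * T.d2 l) ∧
      -- XM2
      (∀ l l' : L, act' (T.d2 l) l' = l * l') := by
  rintro _ rfl
  refine ⟨fun e e' l => ?_, fun e l l' => ?_, fun c e l => ?_, fun c e l => ?_,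
    T.lift_d2_mul_right, T.lift_d2_mul_left, T.lift_mul_d2_eq_lift_lift, T.d2_lift_d2, T.axm2⟩
  · simp only [map_add, LinearMap.add_apply]
  · simp only [map_add]
  · simp only [map_smul, LinearMap.smul_apply]
  · simp only [map_smul]
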